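/- If g ≥ 2, g0 ≥ 0, r ≥ 0, and m_1, ..., m_r ≥ 2 are integers satisfying 2g - 2 = n(2g0 - 2 + Σ(1 - 1/m_i)) for some integer n > 4(g-1), then g0 = 0 and r ≤ 4. -/
import Mathlib


/-- Breuer's Lemma 3.18 (combinatorial core): if a group of order `n > 4(g-1)` acts on a
genus-`g` curve (`g ≥ 2`) with signature `(g0; m_1, …, m_r)`, then the orbit genus is `0`
and there are at most `4` branch points. -/
theorem large_group_orbit_genus_zero (g g0 r n : ℕ) (m : Fin r → ℕ)
    (hg : 2 ≤ g) (hm : ∀ i, 2 ≤ m i)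
    (hRH : (2 * g - 2 : ℚ) = n * (2 * g0 - 2 + ∑ i : Fin r, (1 - 1 / (m i : ℚ))))
    (hn : 4 * (g - 1) < n) :
    g0 = 0 ∧ r ≤ 4 := by
  set S : ℚ := ∑ i : Fin r, (1 - 1 / (m i : ℚ)) with hSdef
  have hterm : ∀ i : Fin r, (1/2 : ℚ) ≤ 1 - 1 / (m i : ℚ) := by
    intro i
    have h2 : (2:ℚ) ≤ (m i : ℚ) := by exact_mod_cast hm i
    have hpos : (0:ℚ) < (m i : ℚ) := by linarith
    have : 1 / (m i : ℚ) ≤ 1/2 := by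
      rw [div_le_div_iff₀ hpos (by norm_num)]; linarith
    linarith
  have hSr : (r : ℚ) / 2 ≤ S := by
    have := Finset.sum_le_sum (fun i _ => hterm i) (s := Finset.univ)
    simpa [hSdef, Finset.sum_const, div_eq_mul_inv, mul_comm] using this
  have hSnonneg : (0:ℚ) ≤ S := by
    have : (0:ℚ) ≤ (r:ℚ)/2 := by positivity
    linarith
  have hgQ : (2:ℚ) ≤ (g:ℚ) := by exact_mod_cast hg
  have hlhs : (0:ℚ) < 2 * (g:ℚ) - 2 := by linarith
  have hnQ : ((4 * (g-1) : ℕ) : ℚ) < (n:ℚ) := by exact_mod_cast hn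
  have hsub : ((g - 1 : ℕ) : ℚ) = (g:ℚ) - 1 := by
    have h1 : 1 ≤ g := le_trans (by norm_num) hg
    push_cast [h1]
    ring
  have hnQ' : 4 * ((g:ℚ) - 1) < (n:ℚ) := by
    rw [← hsub]; push_cast at hnQ ⊢; linarith [hnQ]
  have hnpos : (0:ℚ) < (n:ℚ) := by linarith
  -- key: the bracket cannot be ≥ 1/2
  have hbr : 2 * (g0:ℚ) - 2 + S < 1/2 := by
    by_contra h
    push_neg at h
    have : 2 * (g:ℚ) - 2 ≥ (n:ℚ) * (1/2) := by
      rw [hRH]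
      exact mul_le_mul_of_nonneg_left h (le_of_lt hnpos)
    nlinarith
  have hbrpos : (0:ℚ) < 2 * (g0:ℚ) - 2 + S := by
    by_contra h
    push_neg at h
    have : 2 * (g:ℚ) - 2 ≤ 0 := by
      rw [hRH]
      exact mul_nonpos_of_nonneg_of_nonpos (le_of_lt hnpos) h
    linarith
  have hg0 : g0 = 0 := by
    by_contra h
    have hg0' : 1 ≤ g0 := Nat.one_le_iff_ne_zero.mpr h
    have hg0Q : (1:ℚ) ≤ (g0:ℚ) := by exact_mod_cast hg0'
    -- then 2g0-2+S ≥ S ≥ r/2, and positivity forces ≥ 1/2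
    rcases Nat.eq_zero_or_pos r with hr0 | hrpos
    · subst hr0
      have hS0 : S = 0 := by simp [hSdef]
      rw [hS0] at hbrpos hbr
      -- 0 < 2g0 - 2 < 1/2 impossible for g0 nat
      have : (2:ℚ) ≤ g0 := by
        by_contra h2
        push_neg at h2
        have : g0 < 2 := by exact_mod_cast h2
        interval_cases g0 <;> simp_all <;> linarith
      linarith
    · have hrQ : (1:ℚ) ≤ (r:ℚ) := by exact_mod_cast hrpos
      have : (1:ℚ)/2 ≤ S := by linarith
      linarith
  refine ⟨hg0, ?_⟩
  by_contra hr
  push_neg at hr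
  have hrQ : (5:ℚ) ≤ (r:ℚ) := by exact_mod_cast hr
  have : (5:ℚ)/2 ≤ S := by linarith
  subst hg0
  simp only [Nat.cast_zero] at hbr
  linarith
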